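/- arXiv:2207.11870 — 2 statements merged into one kernel-verified Lean document; each statement's English description precedes it below -/
import Mathlib

section
/- If f : (C₁,ι₁) → (C₂,ι₂) is an almost ι_K-local map of horizontal almost ι_K-complexes and (D,ι_D) is any horizontal almost ι_K-complex, then f ⊗ id_D is an almost ι_K-local map from (C₁,ι₁)⊗(D,ι_D) to (C₂,ι₂)⊗(D,ι_D). Consequently the relation [C] ≤ [D] (existence of an almost ι_K-local map from C to D) is a well-defined partial order on 𝔗^U_K which is translation invariant: [C₁] ≤ [C₂] implies [C₁]+[D] ≤ [C₂]+[D] for every [D]. -/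
/-!
Algebraic model for horizontal almost `ι_K`-complexes (Kang–Park,
"Torsion in the knot concordance group and cabling").

Conventions.  We work over `F₂ = ℤ/2`.  A bigraded chain complex of finitely
generated free `F₂[U]`-modules is presented by a finite homogeneous basis
`idx`, a bidegree function `gr : idx → ℤ × ℤ` (Alexander and Maslov gradings),
and a differential matrix `d` over `F₂[U]` (the `j`-th basis vector is sent to
`∑ i, d i j • eᵢ`; matrix multiplication is composition).  The variable `U`
has bidegree `(−1, −2)` and the differential has bidegree `(0, −1)`.
-/

open Polynomial Matrix Kronecker

noncomputable section

/-- The field with two elements. -/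
abbrev F2 : Type := ZMod 2

/-- The ring `F₂[U]`. -/
abbrev PolyU : Type := Polynomial F2

/-- The ring `F₂[U, U⁻¹]`. -/
abbrev Laur : Type := LaurentPolynomial F2

/-- The localization map `F₂[U] → F₂[U, U⁻¹]`. -/
def toL : PolyU →+* Laur := Polynomial.toLaurent

/-- The skew of a bidegree: `(A, M) ↦ (−A, M)`. -/
def skew (p : ℤ × ℤ) : ℤ × ℤ := (-p.1, p.2)

/-- Data of a bigraded complex of finitely generated free `F₂[U]`-modules. -/
structure CxData where
  idx : Type
  [fintype_idx : Fintype idx]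
  [dec_idx : DecidableEq idx]
  gr : idx → ℤ × ℤ
  d : Matrix idx idx PolyU

attribute [instance] CxData.fintype_idx CxData.dec_idx

/-- The `U = 0` (hat-flavored) truncation of a matrix over `F₂[U]`. -/
def hatM {m n : Type} (f : Matrix m n PolyU) : Matrix m n F2 :=
  fun i j => (f i j).coeff 0

/-- `f` is a homogeneous `F₂[U]`-linear map of bidegree `δ` from `C` to `D`:
a monomial `U^k` appearing in the entry `(i, j)` forces
`gr i + k • (−1, −2) = gr j + δ`. -/
def GradedMap (C D : CxData) (δ : ℤ × ℤ) (f : Matrix D.idx C.idx PolyU) : Prop :=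
  ∀ (i : D.idx) (j : C.idx) (k : ℕ), (f i j).coeff k ≠ 0 →
    D.gr i + (-(k : ℤ), -2 * (k : ℤ)) = C.gr j + δ

/-- An element (column vector) of `C` is homogeneous of bidegree `δ`. -/
def Homog (C : CxData) (δ : ℤ × ℤ) (v : Matrix C.idx Unit PolyU) : Prop :=
  ∀ (i : C.idx) (k : ℕ), (v i ()).coeff k ≠ 0 →
    C.gr i + (-(k : ℤ), -2 * (k : ℤ)) = δ

namespace CxData

/-- `C` is a bigraded chain complex: `∂² = 0` and `∂` has bidegree `(0, −1)`. -/
def IsComplex (C : CxData) : Prop :=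
  C.d * C.d = 0 ∧ GradedMap C C (0, -1) C.d

/-- The formal derivative `Φ` of the differential with respect to `U`. -/
def Phi (C : CxData) : Matrix C.idx C.idx PolyU :=
  fun i j => derivative (C.d i j)

/-- The induced differential on the truncation `Ĉ = C/UC`. -/
def dHat (C : CxData) : Matrix C.idx C.idx F2 := hatM C.d

/-- The truncation of `Φ` to `Ĉ`. -/
def PhiHat (C : CxData) : Matrix C.idx C.idx F2 := hatM C.Phi

/-- The localized differential, over `F₂[U, U⁻¹]`. -/
def dL (C : CxData) : Matrix C.idx C.idx Laur := C.d.map toL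

end CxData

/-- Chain homotopy (everything is mod 2) between maps `Ĉ → D̂` of truncations. -/
def HatHomotopic (C D : CxData) (f g : Matrix D.idx C.idx F2) : Prop :=
  ∃ H : Matrix D.idx C.idx F2, f + g = D.dHat * H + H * C.dHat

/-- Chain homotopy between maps `C → D` over `F₂[U]`. -/
def Homotopic (C D : CxData) (f g : Matrix D.idx C.idx PolyU) : Prop :=
  ∃ H : Matrix D.idx C.idx PolyU, f + g = D.d * H + H * C.d

/-- Chain homotopy between maps `U⁻¹C → U⁻¹D` over `F₂[U, U⁻¹]`. -/
def LHomotopic (C D : CxData) (f g : Matrix D.idx C.idx Laur) : Prop :=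
  ∃ H : Matrix D.idx C.idx Laur, f + g = D.dL * H + H * C.dL

/-- A matrix on the truncation `Ĉ` is skew-graded: each nonzero entry takes
bidegree `(A, M)` to `(−A, M)`. -/
def SkewGraded (C : CxData) (f : Matrix C.idx C.idx F2) : Prop :=
  ∀ i j, f i j ≠ 0 → C.gr i = skew (C.gr j)

/-- `f` is a chain homotopy equivalence of the truncation `Ĉ`. -/
def HatHomotopyEquiv (C : CxData) (f : Matrix C.idx C.idx F2) : Prop :=
  f * C.dHat = C.dHat * f ∧
  ∃ g : Matrix C.idx C.idx F2, g * C.dHat = C.dHat * g ∧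
    HatHomotopic C C (g * f) 1 ∧ HatHomotopic C C (f * g) 1

/-- The localization `U⁻¹C` is chain homotopy equivalent to `F₂[U, U⁻¹]`
(one generator, zero differential). -/
def LocalizationTrivial (C : CxData) : Prop :=
  ∃ (f : Matrix Unit C.idx Laur) (g : Matrix C.idx Unit Laur),
    f * C.dL = 0 ∧ C.dL * g = 0 ∧ f * g = 1 ∧
    ∃ H : Matrix C.idx C.idx Laur, 1 + g * f = C.dL * H + H * C.dL

/-- The homology class of the cycle `x` generates the homology of `U⁻¹C`:
the chain map `F₂[U,U⁻¹] → U⁻¹C` sending the generator to `x` is a chain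
homotopy equivalence. -/
def GeneratesLocalHomology (C : CxData) (x : Matrix C.idx Unit PolyU) : Prop :=
  C.dL * x.map toL = 0 ∧
  ∃ p : Matrix Unit C.idx Laur, p * C.dL = 0 ∧ p * x.map toL = 1 ∧
    ∃ H : Matrix C.idx C.idx Laur, 1 + x.map toL * p = C.dL * H + H * C.dL

/-- A pair as in Definition 2.4: a complex together with an involution of the
hat-flavored truncation. -/
structure Hor where
  C : CxData
  iota : Matrix C.idx C.idx F2

/-- `(C, ι)` is a horizontal almost `ι_K`-complex. -/
def IsHorizontal (X : Hor) : Prop :=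
  X.C.IsComplex ∧
  LocalizationTrivial X.C ∧
  HatHomotopyEquiv X.C X.iota ∧
  SkewGraded X.C X.iota ∧
  HatHomotopic X.C X.C (X.C.PhiHat * X.iota * X.C.PhiHat * X.iota)
    (X.iota * X.C.PhiHat * X.iota * X.C.PhiHat) ∧
  HatHomotopic X.C X.C (X.iota * X.iota)
    (1 + X.C.PhiHat * X.iota * X.C.PhiHat * X.iota) ∧
  ∃ f : Matrix X.C.idx X.C.idx PolyU, f * X.C.d = X.C.d * f ∧
    HatHomotopic X.C X.C (hatM f) (X.iota * X.C.PhiHat * X.iota)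

/-- The localization `U⁻¹f` of `f` is a chain homotopy equivalence. -/
def LocalizedHomotopyEquiv (C D : CxData) (f : Matrix D.idx C.idx PolyU) : Prop :=
  ∃ g : Matrix C.idx D.idx Laur,
    g * D.dL = C.dL * g ∧
    LHomotopic C C (g * f.map toL) 1 ∧
    LHomotopic D D (f.map toL * g) 1

/-- An almost `ι_K`-local map from `(C, ι_C)` to `(D, ι_D)`: a bidegree
preserving `F₂[U]`-linear chain map whose localization is a chain homotopy
equivalence and whose truncation homotopy-commutes with the involutions. -/
def AlmostLocalMap (X Y : Hor) (f : Matrix Y.C.idx X.C.idx PolyU) : Prop :=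
  GradedMap X.C Y.C (0, 0) f ∧
  f * X.C.d = Y.C.d * f ∧
  LocalizedHomotopyEquiv X.C Y.C f ∧
  HatHomotopic X.C Y.C (Y.iota * hatM f) (hatM f * X.iota)

/-- `X ≤ Y`: there is an almost `ι_K`-local map from `X` to `Y`. -/
def Le (X Y : Hor) : Prop := ∃ f, AlmostLocalMap X Y f

/-- Almost `ι_K`-local equivalence. -/
def AlmostLocalEquiv (X Y : Hor) : Prop := Le X Y ∧ Le Y X

/-- The tensor product over `F₂[U]` of two complexes. -/
def tensorCx (C D : CxData) : CxData where
  idx := C.idx × D.idx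
  gr := fun p => C.gr p.1 + D.gr p.2
  d := C.d ⊗ₖ (1 : Matrix D.idx D.idx PolyU) + (1 : Matrix C.idx C.idx PolyU) ⊗ₖ D.d

/-- The tensor product of pairs, with `ι_{C⊗D} = ι_C ⊗ ι_D + Φι_C ⊗ ι_D Φ`. -/
def tensorHor (X Y : Hor) : Hor where
  C := tensorCx X.C Y.C
  iota := X.iota ⊗ₖ Y.iota + (X.C.PhiHat * X.iota) ⊗ₖ (Y.iota * Y.C.PhiHat)

/-- The trivial complex `C_O = F₂[U]`, generator in bidegree `(0,0)`, zero
differential, identity involution. -/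
def CO : Hor where
  C := { idx := Unit, gr := fun _ => (0, 0), d := 0 }
  iota := 1

/-- The complex `C_E` of the figure-eight knot: generators `a, b, c, d, x`
(indices `0, 1, 2, 3, 4`), with `a, x` in bidegree `(0,0)`, differential
`∂a = Ub`, `∂c = Ud`, `∂b = ∂d = ∂x = 0`, and involution
`ι(a) = a + x`, `ι(b) = c`, `ι(c) = b`, `ι(d) = d`, `ι(x) = x + d`. -/
def CE : Hor where
  C := { idx := Fin 5
         gr := ![(0, 0), (1, 1), (-1, 1), (0, 2), (0, 0)]
         d := !![0, 0, 0, 0, 0;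
                 Polynomial.X, 0, 0, 0, 0;
                 0, 0, 0, 0, 0;
                 0, 0, Polynomial.X, 0, 0;
                 0, 0, 0, 0, 0] }
  iota := !![1, 0, 0, 0, 0;
             0, 0, 1, 0, 0;
             0, 1, 0, 0, 0;
             0, 0, 0, 1, 1;
             1, 0, 0, 0, 1]

/-- The complex `C_n`: generators `a_n, b_n, c_n, d_n, x_n` (indices
`0, …, 4`), `a_n, x_n` in bidegree `(0,0)`, differential `∂a_n = Uⁿ b_n`,
`∂c_n = Uⁿ d_n`, and involution `ι(a_n) = a_n + x_n`, `ι(b_n) = c_n`,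
`ι(c_n) = b_n`, `ι(d_n) = d_n`, `ι(x_n) = x_n`. -/
def Cn (n : ℕ) : Hor where
  C := { idx := Fin 5
         gr := ![(0, 0), ((n : ℤ), 2 * (n : ℤ) - 1), (-(n : ℤ), 2 * (n : ℤ) - 1),
                 (0, 4 * (n : ℤ) - 2), (0, 0)]
         d := !![0, 0, 0, 0, 0;
                 Polynomial.X ^ n, 0, 0, 0, 0;
                 0, 0, 0, 0, 0;
                 0, 0, Polynomial.X ^ n, 0, 0;
                 0, 0, 0, 0, 0] }
  iota := !![1, 0, 0, 0, 0;
             0, 0, 1, 0, 0;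
             0, 1, 0, 0, 0;
             0, 0, 0, 1, 0;
             1, 0, 0, 0, 1]

/-- The dual complex `C* = Hom_{F₂[U]}(C, F₂[U])`: dual basis, negated
gradings, transposed differential. -/
def dualCx (C : CxData) : CxData where
  idx := C.idx
  gr := fun i => -C.gr i
  d := C.dᵀ

/-- The dual pair `(C*, ι*)`. -/
def dualHor (X : Hor) : Hor where
  C := dualCx X.C
  iota := X.iotaᵀ

/-- `n`-fold tensor power (`0` gives the trivial complex `C_O`). -/
def tensorPow (X : Hor) : ℕ → Hor
  | 0 => CO
  | n + 1 => tensorHor (tensorPow X n) X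

/-- The trace map `tr : C ⊗ C* → F₂[U]`. -/
def trMap (C : CxData) : Matrix Unit (C.idx × C.idx) PolyU :=
  fun _ p => if p.1 = p.2 then 1 else 0

/-- The cotrace map `cotr : F₂[U] → C ⊗ C*`. -/
def cotrMap (C : CxData) : Matrix (C.idx × C.idx) Unit PolyU :=
  fun p _ => if p.1 = p.2 then 1 else 0


/-!
Chain maps and homotopies over `F₂`, `F₂[U]` and `F₂[U, U⁻¹]` are all treated as matrices over
a commutative ring of characteristic two. Tensoring with `id_D` preserves gradings, chain maps
and homotopies (a homotopy `H` becomes `H ⊗ m` for any `m` commuting with `∂_D`), so `f ⊗ id_D`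
is again a chain map whose localization is a homotopy equivalence. The only non-formal point is
the summand `Φι₁ ⊗ ι_DΦ` of the tensor involution: it needs `Φ₂ι₂f̂ ≃ f̂Φ₁ι₁`, which follows from
`ι₂f̂ ≃ f̂ι₁` and `Φ₂f̂ ≃ f̂Φ₁`, the latter obtained by differentiating `f∂ = ∂f` with respect to
`U`. Reflexivity, transitivity and compatibility with local equivalence are formal.
-/

instance : CharP Laur 2 := charP_of_injective_algebraMap' F2 2

section ChainHomotopy

variable {R : Type*} [CommRing R] {a b c : Type*}

theorem Matrix.add_self_of_charTwo [CharP R 2] (A : Matrix b a R) : A + A = 0 := by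
  ext i j
  exact CharTwo.add_self_eq_zero _

theorem Matrix.eq_of_add_eq_zero_of_charTwo [CharP R 2] {A B : Matrix b a R}
    (h : A + B = 0) : A = B :=
  (eq_neg_of_add_eq_zero_left h).trans (neg_eq_of_add_eq_zero_left B.add_self_of_charTwo)

variable [Fintype a] [Fintype b] [Fintype c]

/-- Chain homotopy between maps of complexes with differentials `dC`, `dD`, written for
characteristic two, where `f - g = f + g`. -/
def ChainHomotopic (dD : Matrix b b R) (dC : Matrix a a R) (f g : Matrix b a R) : Prop :=
  ∃ H : Matrix b a R, f + g = dD * H + H * dC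

variable {dA : Matrix a a R} {dB : Matrix b b R} {dC : Matrix c c R}

namespace ChainHomotopic

theorem refl [CharP R 2] (f : Matrix b a R) : ChainHomotopic dB dA f f :=
  ⟨0, by rw [f.add_self_of_charTwo, Matrix.mul_zero, Matrix.zero_mul, add_zero]⟩

theorem trans [CharP R 2] {f g h : Matrix b a R} (hfg : ChainHomotopic dB dA f g)
    (hgh : ChainHomotopic dB dA g h) : ChainHomotopic dB dA f h := by
  obtain ⟨H₁, e₁⟩ := hfg
  obtain ⟨H₂, e₂⟩ := hgh
  refine ⟨H₁ + H₂, ?_⟩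
  calc f + h = f + (g + g) + h := by rw [g.add_self_of_charTwo, add_zero]
    _ = (f + g) + (g + h) := by abel
    _ = dB * (H₁ + H₂) + (H₁ + H₂) * dA := by rw [e₁, e₂, Matrix.mul_add, Matrix.add_mul]; abel

instance [CharP R 2] :
    Trans (ChainHomotopic (R := R) dB dA) (ChainHomotopic dB dA) (ChainHomotopic dB dA) :=
  ⟨trans⟩

theorem add {f g f' g' : Matrix b a R} (h : ChainHomotopic dB dA f g)
    (h' : ChainHomotopic dB dA f' g') : ChainHomotopic dB dA (f + f') (g + g') := by
  obtain ⟨H, e⟩ := h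
  obtain ⟨H', e'⟩ := h'
  refine ⟨H + H', ?_⟩
  calc f + f' + (g + g') = (f + g) + (f' + g') := by abel
    _ = dB * (H + H') + (H + H') * dA := by rw [e, e', Matrix.mul_add, Matrix.add_mul]; abel

theorem mul_left {f g : Matrix b a R} (p : Matrix c b R) (hp : p * dB = dC * p)
    (h : ChainHomotopic dB dA f g) : ChainHomotopic dC dA (p * f) (p * g) := by
  obtain ⟨H, e⟩ := h
  exact ⟨p * H, by rw [← Matrix.mul_add, e, Matrix.mul_add, ← Matrix.mul_assoc, hp,
    Matrix.mul_assoc, Matrix.mul_assoc]⟩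

theorem mul_right {f g : Matrix b a R} (q : Matrix a c R) (hq : dA * q = q * dC)
    (h : ChainHomotopic dB dA f g) : ChainHomotopic dB dC (f * q) (g * q) := by
  obtain ⟨H, e⟩ := h
  exact ⟨H * q, by rw [← Matrix.add_mul, e, Matrix.add_mul, Matrix.mul_assoc dB,
    Matrix.mul_assoc H dA q, hq, ← Matrix.mul_assoc H q dC]⟩

/-- Composing homotopy inverses. -/
theorem mul_mul_homotopic_one [CharP R 2] [DecidableEq a] [DecidableEq b]
    {p : Matrix a b R} {q : Matrix b a R} {b' : Matrix b c R} {c' : Matrix c b R}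
    (hp : p * dB = dA * p) (hq : dB * q = q * dA)
    (hbc : ChainHomotopic dB dB (b' * c') 1) (hpq : ChainHomotopic dA dA (p * q) 1) :
    ChainHomotopic dA dA (p * b' * (c' * q)) 1 :=
  calc p * b' * (c' * q) = p * (b' * c') * q := by simp only [Matrix.mul_assoc]
    ChainHomotopic dA dA _ (p * 1 * q) := (hbc.mul_left p hp).mul_right q hq
    _ = p * q := by rw [Matrix.mul_one]
    ChainHomotopic dA dA _ 1 := hpq

theorem intertwine_mul [CharP R 2] {ιA : Matrix a a R} {ιB : Matrix b b R} {ιC : Matrix c c R}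
    {f : Matrix b a R} {g : Matrix c b R} (hg : ChainHomotopic dC dB (ιC * g) (g * ιB))
    (hf : ChainHomotopic dB dA (ιB * f) (f * ιA)) (hgc : g * dB = dC * g)
    (hfc : dB * f = f * dA) : ChainHomotopic dC dA (ιC * (g * f)) (g * f * ιA) :=
  calc ιC * (g * f) = ιC * g * f := (Matrix.mul_assoc _ _ _).symm
    ChainHomotopic dC dA _ (g * ιB * f) := hg.mul_right f hfc
    _ = g * (ιB * f) := Matrix.mul_assoc _ _ _
    ChainHomotopic dC dA _ (g * (f * ιA)) := hf.mul_left g hgc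
    _ = g * f * ιA := (Matrix.mul_assoc _ _ _).symm

end ChainHomotopic

end ChainHomotopy

section RingHomMap

variable {R S : Type*} [CommRing R] [CommRing S] (φ : R →+* S)

theorem Matrix.map_kronecker {l m n p : Type*} (A : Matrix l m R) (B : Matrix n p R) :
    (A ⊗ₖ B).map φ = A.map φ ⊗ₖ B.map φ := by
  ext ⟨i, k⟩ ⟨j, l⟩
  simp

theorem Matrix.map_mul_eq_mul_map_of_mul_eq {a b : Type*} [Fintype a] [Fintype b]
    {dA : Matrix a a R} {dB : Matrix b b R} {f : Matrix b a R} (hf : f * dA = dB * f) :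
    f.map φ * dA.map φ = dB.map φ * f.map φ := by
  rw [← Matrix.map_mul, hf, Matrix.map_mul]

end RingHomMap

section Tensor

variable {R : Type*} [CommRing R] {a b e : Type*} [DecidableEq a] [DecidableEq e]

def tensorDiff (dA : Matrix a a R) (dE : Matrix e e R) : Matrix (a × e) (a × e) R :=
  dA ⊗ₖ 1 + 1 ⊗ₖ dE

variable {dA : Matrix a a R} {dB : Matrix b b R} {dE : Matrix e e R}

theorem Matrix.map_tensorDiff {S : Type*} [CommRing S] (φ : R →+* S) :
    (tensorDiff dA dE).map φ = tensorDiff (dA.map φ) (dE.map φ) := by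
  rw [tensorDiff, tensorDiff, Matrix.map_add _ (map_add φ), Matrix.map_kronecker,
    Matrix.map_kronecker, Matrix.map_one _ φ.map_zero φ.map_one,
    Matrix.map_one _ φ.map_zero φ.map_one]

variable [Fintype a] [Fintype b] [Fintype e]

theorem kronecker_one_mul_tensorDiff [DecidableEq b] {f : Matrix b a R} (hf : f * dA = dB * f) :
    (f ⊗ₖ (1 : Matrix e e R)) * tensorDiff dA dE = tensorDiff dB dE * (f ⊗ₖ (1 : Matrix e e R)) := by
  rw [tensorDiff, tensorDiff, Matrix.mul_add, Matrix.add_mul, ← Matrix.mul_kronecker_mul,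
    ← Matrix.mul_kronecker_mul, ← Matrix.mul_kronecker_mul, ← Matrix.mul_kronecker_mul, hf]
  simp only [Matrix.one_mul, Matrix.mul_one]

theorem ChainHomotopic.kronecker [CharP R 2] [DecidableEq b] {f g : Matrix b a R}
    (m : Matrix e e R) (hm : m * dE = dE * m) (h : ChainHomotopic dB dA f g) :
    ChainHomotopic (tensorDiff dB dE) (tensorDiff dA dE) (f ⊗ₖ m) (g ⊗ₖ m) := by
  obtain ⟨H, hH⟩ := h
  refine ⟨H ⊗ₖ m, ?_⟩
  calc f ⊗ₖ m + g ⊗ₖ m = (dB * H) ⊗ₖ m + (H * dA) ⊗ₖ m + H ⊗ₖ (dE * m + dE * m) := by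
        rw [← Matrix.add_kronecker, hH, Matrix.add_self_of_charTwo, Matrix.kronecker_zero,
          add_zero, Matrix.add_kronecker]
    _ = tensorDiff dB dE * (H ⊗ₖ m) + (H ⊗ₖ m) * tensorDiff dA dE := by
      rw [tensorDiff, tensorDiff, Matrix.mul_add, Matrix.add_mul, ← Matrix.mul_kronecker_mul,
        ← Matrix.mul_kronecker_mul, ← Matrix.mul_kronecker_mul, ← Matrix.mul_kronecker_mul,
        Matrix.kronecker_add, Matrix.one_mul, Matrix.mul_one, Matrix.one_mul, Matrix.mul_one, hm]
      abel

theorem ChainHomotopic.mul_kronecker_one [CharP R 2] {f : Matrix b a R} {g : Matrix a b R}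
    (h : ChainHomotopic dA dA (g * f) 1) :
    ChainHomotopic (tensorDiff dA dE) (tensorDiff dA dE)
      ((g ⊗ₖ (1 : Matrix e e R)) * (f ⊗ₖ (1 : Matrix e e R))) 1 := by
  rw [← Matrix.mul_kronecker_mul, Matrix.mul_one, ← Matrix.one_kronecker_one]
  exact h.kronecker 1 (by rw [Matrix.one_mul, Matrix.mul_one])

def tensorIota (ιA ΦA : Matrix a a R) (ιE ΦE : Matrix e e R) : Matrix (a × e) (a × e) R :=
  ιA ⊗ₖ ιE + (ΦA * ιA) ⊗ₖ (ιE * ΦE)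

theorem ChainHomotopic.tensorIota_mul_kronecker_one [CharP R 2] [DecidableEq b]
    {ιA ΦA : Matrix a a R} {ιB ΦB : Matrix b b R} {ιE ΦE : Matrix e e R} {f : Matrix b a R}
    (hι : ChainHomotopic dB dA (ιB * f) (f * ιA))
    (hΦι : ChainHomotopic dB dA (ΦB * ιB * f) (f * (ΦA * ιA)))
    (hιE : ιE * dE = dE * ιE) (hιΦE : ιE * ΦE * dE = dE * (ιE * ΦE)) :
    ChainHomotopic (tensorDiff dB dE) (tensorDiff dA dE)
      (tensorIota ιB ΦB ιE ΦE * (f ⊗ₖ (1 : Matrix e e R)))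
      ((f ⊗ₖ (1 : Matrix e e R)) * tensorIota ιA ΦA ιE ΦE) := by
  convert (hι.kronecker ιE hιE).add (hΦι.kronecker _ hιΦE) using 1 <;>
    simp only [tensorIota, Matrix.add_mul, Matrix.mul_add, ← Matrix.mul_kronecker_mul,
      Matrix.mul_one, Matrix.one_mul]

end Tensor

section Truncation

variable {l m n : Type}

theorem hatM_add (A B : Matrix m n PolyU) : hatM (A + B) = hatM A + hatM B :=
  Matrix.map_add _ (map_add (Polynomial.constantCoeff : PolyU →+* F2)) A B

theorem hatM_zero : hatM (0 : Matrix m n PolyU) = 0 :=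
  Matrix.map_zero _ (map_zero (Polynomial.constantCoeff : PolyU →+* F2))

theorem hatM_mul [Fintype m] (A : Matrix l m PolyU) (B : Matrix m n PolyU) :
    hatM (A * B) = hatM A * hatM B :=
  Matrix.map_mul (f := (Polynomial.constantCoeff : PolyU →+* F2))

theorem hatM_one [DecidableEq n] : hatM (1 : Matrix n n PolyU) = 1 :=
  Matrix.map_one _ (map_zero (Polynomial.constantCoeff : PolyU →+* F2)) (map_one _)

theorem hatM_kronecker {p : Type} (A : Matrix l m PolyU) (B : Matrix n p PolyU) :
    hatM (A ⊗ₖ B) = hatM A ⊗ₖ hatM B :=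
  Matrix.map_kronecker (Polynomial.constantCoeff : PolyU →+* F2) A B

end Truncation

section ChainMaps

variable {C D : CxData} {f : Matrix D.idx C.idx PolyU}

theorem hatM_mul_dHat (hf : f * C.d = D.d * f) : hatM f * C.dHat = D.dHat * hatM f :=
  Matrix.map_mul_eq_mul_map_of_mul_eq (Polynomial.constantCoeff : PolyU →+* F2) hf

theorem map_toL_mul_dL (hf : f * C.d = D.d * f) : f.map toL * C.dL = D.dL * f.map toL :=
  Matrix.map_mul_eq_mul_map_of_mul_eq toL hf

theorem tensorCx_dHat (C D : CxData) :
    (tensorCx C D).dHat = tensorDiff C.dHat D.dHat :=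
  Matrix.map_tensorDiff (Polynomial.constantCoeff : PolyU →+* F2)

theorem tensorCx_dL (C D : CxData) : (tensorCx C D).dL = tensorDiff C.dL D.dL :=
  Matrix.map_tensorDiff toL

end ChainMaps

theorem CxData.Phi_eq_map (C : CxData) : C.Phi = C.d.map derivative := rfl

theorem Matrix.map_derivative_mul {R : Type*} [CommSemiring R] {l m n : Type*} [Fintype m]
    (A : Matrix l m R[X]) (B : Matrix m n R[X]) :
    (A * B).map derivative = A.map derivative * B + A * B.map derivative := by
  ext i j
  simp [Matrix.mul_apply, Polynomial.derivative_mul, Finset.sum_add_distrib]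

theorem CxData.PhiHat_mul_dHat {C : CxData} (h : C.d * C.d = 0) :
    C.PhiHat * C.dHat = C.dHat * C.PhiHat := by
  have hΦ : C.Phi * C.d + C.d * C.Phi = 0 := by
    simpa only [CxData.Phi_eq_map, Matrix.map_derivative_mul,
      Matrix.map_zero _ derivative.map_zero] using congrArg (Matrix.map · derivative) h
  apply Matrix.eq_of_add_eq_zero_of_charTwo
  simpa only [CxData.PhiHat, CxData.dHat, hatM_add, hatM_mul, hatM_zero] using congrArg hatM hΦ

/-- Differentiating `f ∂ = ∂ f` in `U` shows that the truncation of `∂f/∂U` is a homotopy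
between `Φ f̂` and `f̂ Φ`. -/
theorem chainHomotopic_PhiHat_mul_hatM {C D : CxData} {f : Matrix D.idx C.idx PolyU}
    (hf : f * C.d = D.d * f) :
    ChainHomotopic D.dHat C.dHat (D.PhiHat * hatM f) (hatM f * C.PhiHat) := by
  set f' := f.map derivative
  have hf' : hatM f' * C.dHat + hatM f * C.PhiHat = D.PhiHat * hatM f + D.dHat * hatM f' := by
    simpa only [CxData.PhiHat, CxData.dHat, CxData.Phi_eq_map, Matrix.map_derivative_mul,
      hatM_add, hatM_mul] using congrArg (hatM <| Matrix.map · derivative) hf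
  refine ⟨hatM f', Matrix.eq_of_add_eq_zero_of_charTwo ?_⟩
  calc D.PhiHat * hatM f + hatM f * C.PhiHat + (D.dHat * hatM f' + hatM f' * C.dHat)
      = (hatM f' * C.dHat + hatM f * C.PhiHat) + (D.PhiHat * hatM f + D.dHat * hatM f') := by
        abel
    _ = 0 := by rw [hf', Matrix.add_self_of_charTwo]

namespace GradedMap

theorem one (C : CxData) : GradedMap C C (0, 0) (1 : Matrix C.idx C.idx PolyU) := by
  intro i j k hk
  obtain rfl : i = j := by
    by_contra hij
    simp [Matrix.one_apply_ne hij] at hk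
  obtain rfl : k = 0 := by
    by_contra hk0
    simp [Polynomial.coeff_one, hk0] at hk
  simp

theorem comp {A B C : CxData} {δ ε : ℤ × ℤ} {f : Matrix B.idx A.idx PolyU}
    {g : Matrix C.idx B.idx PolyU} (hf : GradedMap A B δ f) (hg : GradedMap B C ε g) :
    GradedMap A C (δ + ε) (g * f) := by
  intro i j k hk
  rw [Matrix.mul_apply, Polynomial.finsetSum_coeff] at hk
  obtain ⟨m, -, hm⟩ := Finset.exists_ne_zero_of_sum_ne_zero hk
  rw [Polynomial.coeff_mul] at hm
  obtain ⟨⟨p, q⟩, hpq, hne⟩ := Finset.exists_ne_zero_of_sum_ne_zero hm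
  obtain rfl : p + q = k := Finset.HasAntidiagonal.mem_antidiagonal.mp hpq
  have eg := hg i m p (left_ne_zero_of_mul hne)
  have ef := hf m j q (right_ne_zero_of_mul hne)
  rw [Prod.ext_iff] at eg ef ⊢
  simp only [Prod.fst_add, Prod.snd_add] at eg ef ⊢
  push_cast
  constructor <;> omega

theorem kronecker_one {C₁ C₂ : CxData} (D : CxData) {δ : ℤ × ℤ}
    {f : Matrix C₂.idx C₁.idx PolyU} (hf : GradedMap C₁ C₂ δ f) :
    GradedMap (tensorCx C₁ D) (tensorCx C₂ D) δ (f ⊗ₖ (1 : Matrix D.idx D.idx PolyU)) := by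
  rintro ⟨i, u⟩ ⟨j, v⟩ k hk
  obtain rfl : u = v := by
    by_contra huv
    simp [Matrix.one_apply_ne huv] at hk
  have e := hf i j k (by simpa using hk)
  change (C₂.gr i + D.gr u) + _ = (C₁.gr j + D.gr u) + _
  rw [add_right_comm, e, add_right_comm]

end GradedMap

namespace LocalizedHomotopyEquiv

theorem one (C : CxData) : LocalizedHomotopyEquiv C C 1 := by
  refine ⟨1, by rw [Matrix.one_mul, Matrix.mul_one], ?_, ?_⟩ <;>
  · rw [Matrix.map_one _ (map_zero toL) (map_one toL), Matrix.mul_one]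
    exact ChainHomotopic.refl 1

theorem comp {A B C : CxData} {f : Matrix B.idx A.idx PolyU} {g : Matrix C.idx B.idx PolyU}
    (hfc : f * A.d = B.d * f) (hgc : g * B.d = C.d * g) (hf : LocalizedHomotopyEquiv A B f)
    (hg : LocalizedHomotopyEquiv B C g) : LocalizedHomotopyEquiv A C (g * f) := by
  obtain ⟨f', hf'c, hf'f, hff'⟩ := hf
  obtain ⟨g', hg'c, hg'g, hgg'⟩ := hg
  refine ⟨f' * g', ?_, ?_, ?_⟩
  · rw [Matrix.mul_assoc, hg'c, ← Matrix.mul_assoc, hf'c, Matrix.mul_assoc]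
  · rw [Matrix.map_mul]
    exact ChainHomotopic.mul_mul_homotopic_one hf'c (map_toL_mul_dL hfc).symm hg'g hf'f
  · rw [Matrix.map_mul]
    exact ChainHomotopic.mul_mul_homotopic_one (map_toL_mul_dL hgc) hg'c.symm hff' hgg'

theorem kronecker_one {C₁ C₂ : CxData} (D : CxData) {f : Matrix C₂.idx C₁.idx PolyU}
    (hf : LocalizedHomotopyEquiv C₁ C₂ f) :
    LocalizedHomotopyEquiv (tensorCx C₁ D) (tensorCx C₂ D)
      (f ⊗ₖ (1 : Matrix D.idx D.idx PolyU)) := by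
  obtain ⟨f', hf'c, hf'f, hff'⟩ := hf
  have hmap : (f ⊗ₖ (1 : Matrix D.idx D.idx PolyU)).map toL
      = f.map toL ⊗ₖ (1 : Matrix D.idx D.idx Laur) := by
    rw [Matrix.map_kronecker, Matrix.map_one _ (map_zero toL) (map_one toL)]
  have hf'f₁ : ChainHomotopic (tensorDiff C₁.dL D.dL) (tensorDiff C₁.dL D.dL)
      ((f' ⊗ₖ (1 : Matrix D.idx D.idx Laur)) * (f ⊗ₖ (1 : Matrix D.idx D.idx PolyU)).map toL)
      1 := by
    rw [hmap]
    exact ChainHomotopic.mul_kronecker_one hf'f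
  have hff'₁ : ChainHomotopic (tensorDiff C₂.dL D.dL) (tensorDiff C₂.dL D.dL)
      ((f ⊗ₖ (1 : Matrix D.idx D.idx PolyU)).map toL * (f' ⊗ₖ (1 : Matrix D.idx D.idx Laur)))
      1 := by
    rw [hmap]
    exact ChainHomotopic.mul_kronecker_one hff'
  refine ⟨f' ⊗ₖ (1 : Matrix D.idx D.idx Laur), ?_, ?_, ?_⟩
  · rw [tensorCx_dL, tensorCx_dL]
    exact kronecker_one_mul_tensorDiff hf'c
  · change ChainHomotopic (tensorCx C₁ D).dL (tensorCx C₁ D).dL _ _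
    rw [tensorCx_dL]
    exact hf'f₁
  · change ChainHomotopic (tensorCx C₂ D).dL (tensorCx C₂ D).dL _ _
    rw [tensorCx_dL]
    exact hff'₁

end LocalizedHomotopyEquiv

theorem IsHorizontal.d_mul_d {X : Hor} (h : IsHorizontal X) : X.C.d * X.C.d = 0 :=
  h.1.1

theorem IsHorizontal.iota_mul_dHat {X : Hor} (h : IsHorizontal X) :
    X.iota * X.C.dHat = X.C.dHat * X.iota :=
  h.2.2.1.1

theorem chainHomotopic_PhiHat_iota_hatM {X₁ X₂ : Hor} {f : Matrix X₂.C.idx X₁.C.idx PolyU}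
    (hι₁ : X₁.iota * X₁.C.dHat = X₁.C.dHat * X₁.iota) (hd₂ : X₂.C.d * X₂.C.d = 0)
    (hfc : f * X₁.C.d = X₂.C.d * f)
    (hfι : HatHomotopic X₁.C X₂.C (X₂.iota * hatM f) (hatM f * X₁.iota)) :
    ChainHomotopic X₂.C.dHat X₁.C.dHat (X₂.C.PhiHat * X₂.iota * hatM f)
      (hatM f * (X₁.C.PhiHat * X₁.iota)) :=
  calc X₂.C.PhiHat * X₂.iota * hatM f = X₂.C.PhiHat * (X₂.iota * hatM f) := Matrix.mul_assoc _ _ _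
    ChainHomotopic X₂.C.dHat X₁.C.dHat _ (X₂.C.PhiHat * (hatM f * X₁.iota)) :=
      ChainHomotopic.mul_left _ (CxData.PhiHat_mul_dHat hd₂) hfι
    _ = X₂.C.PhiHat * hatM f * X₁.iota := (Matrix.mul_assoc _ _ _).symm
    ChainHomotopic X₂.C.dHat X₁.C.dHat _ (hatM f * X₁.C.PhiHat * X₁.iota) :=
      (chainHomotopic_PhiHat_mul_hatM hfc).mul_right _ hι₁.symm
    _ = hatM f * (X₁.C.PhiHat * X₁.iota) := Matrix.mul_assoc _ _ _

namespace AlmostLocalMap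

theorem one (X : Hor) : AlmostLocalMap X X 1 := by
  refine ⟨GradedMap.one X.C, by rw [Matrix.one_mul, Matrix.mul_one],
    LocalizedHomotopyEquiv.one X.C, ?_⟩
  rw [hatM_one, Matrix.mul_one, Matrix.one_mul]
  exact ChainHomotopic.refl _

theorem comp {X Y Z : Hor} {f : Matrix Y.C.idx X.C.idx PolyU} {g : Matrix Z.C.idx Y.C.idx PolyU}
    (hf : AlmostLocalMap X Y f) (hg : AlmostLocalMap Y Z g) : AlmostLocalMap X Z (g * f) := by
  obtain ⟨hfgr, hfc, hfL, hfι⟩ := hf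
  obtain ⟨hggr, hgc, hgL, hgι⟩ := hg
  refine ⟨by simpa using hfgr.comp hggr,
    by rw [Matrix.mul_assoc, hfc, ← Matrix.mul_assoc, hgc, Matrix.mul_assoc],
    hfL.comp hfc hgc hgL, ?_⟩
  rw [hatM_mul]
  exact ChainHomotopic.intertwine_mul hgι hfι (hatM_mul_dHat hgc) (hatM_mul_dHat hfc).symm

theorem kronecker_one {X₁ X₂ D : Hor} (h₁ : IsHorizontal X₁) (h₂ : IsHorizontal X₂)
    (hD : IsHorizontal D) {f : Matrix X₂.C.idx X₁.C.idx PolyU} (hf : AlmostLocalMap X₁ X₂ f) :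
    AlmostLocalMap (tensorHor X₁ D) (tensorHor X₂ D) (f ⊗ₖ (1 : Matrix D.C.idx D.C.idx PolyU)) := by
  obtain ⟨hfgr, hfc, hfL, hfι⟩ := hf
  refine ⟨hfgr.kronecker_one D.C, kronecker_one_mul_tensorDiff hfc, hfL.kronecker_one D.C, ?_⟩
  have hιΦD : D.iota * D.C.PhiHat * D.C.dHat = D.C.dHat * (D.iota * D.C.PhiHat) := by
    rw [Matrix.mul_assoc, CxData.PhiHat_mul_dHat hD.d_mul_d, ← Matrix.mul_assoc,
      hD.iota_mul_dHat, Matrix.mul_assoc]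
  have key := ChainHomotopic.tensorIota_mul_kronecker_one hfι
    (chainHomotopic_PhiHat_iota_hatM h₁.iota_mul_dHat h₂.d_mul_d hfc hfι) hD.iota_mul_dHat hιΦD
  rw [← hatM_one, ← hatM_kronecker] at key
  change ChainHomotopic (tensorCx X₂.C D.C).dHat (tensorCx X₁.C D.C).dHat _ _
  rw [tensorCx_dHat, tensorCx_dHat]
  exact key

end AlmostLocalMap

theorem Le.refl (X : Hor) : Le X X :=
  ⟨1, AlmostLocalMap.one X⟩

theorem Le.trans {X Y Z : Hor} (hXY : Le X Y) (hYZ : Le Y Z) : Le X Z :=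
  let ⟨f, hf⟩ := hXY
  let ⟨g, hg⟩ := hYZ
  ⟨g * f, hf.comp hg⟩

theorem Le.tensorHor {X Y D : Hor} (hX : IsHorizontal X) (hY : IsHorizontal Y)
    (hD : IsHorizontal D) (hXY : Le X Y) : Le (tensorHor X D) (tensorHor Y D) :=
  let ⟨_, hf⟩ := hXY
  ⟨_, hf.kronecker_one hX hY hD⟩

/-- If `f : (C₁,ι₁) → (C₂,ι₂)` is an almost `ι_K`-local map
and `(D, ι_D)` is any horizontal almost `ι_K`-complex, then `f ⊗ id_D` is an
almost `ι_K`-local map from `(C₁,ι₁) ⊗ (D,ι_D)` to `(C₂,ι₂) ⊗ (D,ι_D)`.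
Consequently the relation `[C] ≤ [D]` (existence of an almost `ι_K`-local
map) is a well-defined partial order on `𝔗^U_K` (reflexive, transitive,
compatible with almost `ι_K`-local equivalence) which is translation
invariant. -/
theorem le_translation_invariant_partial_order :
    (∀ X₁ X₂ D : Hor, IsHorizontal X₁ → IsHorizontal X₂ → IsHorizontal D →
      ∀ f : Matrix X₂.C.idx X₁.C.idx PolyU, AlmostLocalMap X₁ X₂ f →
        AlmostLocalMap (tensorHor X₁ D) (tensorHor X₂ D)
          (f ⊗ₖ (1 : Matrix D.C.idx D.C.idx PolyU))) ∧
    (∀ X : Hor, IsHorizontal X → Le X X) ∧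
    (∀ X Y Z : Hor, IsHorizontal X → IsHorizontal Y → IsHorizontal Z →
      Le X Y → Le Y Z → Le X Z) ∧
    (∀ X X' Y Y' : Hor, IsHorizontal X → IsHorizontal X' →
      IsHorizontal Y → IsHorizontal Y' →
      AlmostLocalEquiv X X' → AlmostLocalEquiv Y Y' → Le X Y → Le X' Y') ∧
    (∀ X Y D : Hor, IsHorizontal X → IsHorizontal Y → IsHorizontal D →
      Le X Y → Le (tensorHor X D) (tensorHor Y D)) :=
  ⟨fun _ _ _ h₁ h₂ hD _ hf => hf.kronecker_one h₁ h₂ hD,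
    fun X _ => Le.refl X,
    fun _ _ _ _ _ _ => Le.trans,
    fun _ _ _ _ _ _ _ _ hXX' hYY' hXY => (hXX'.2.trans hXY).trans hYY'.1,
    fun _ _ _ hX hY hD => Le.tensorHor hX hY hD⟩

end
end

section
/- The classes of C_O and C_E in 𝔗^U_K are incomparable: there is no almost ι_K-local map from C_E to C_O, and there is no almost ι_K-local map from C_O to C_E. -/
/-!
Algebraic model for horizontal almost `ι_K`-complexes (Kang–Park,
"Torsion in the knot concordance group and cabling").

Conventions.  We work over `F₂ = ℤ/2`.  A bigraded chain complex of finitely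
generated free `F₂[U]`-modules is presented by a finite homogeneous basis
`idx`, a bidegree function `gr : idx → ℤ × ℤ` (Alexander and Maslov gradings),
and a differential matrix `d` over `F₂[U]` (the `j`-th basis vector is sent to
`∑ i, d i j • eᵢ`; matrix multiplication is composition).  The variable `U`
has bidegree `(−1, −2)` and the differential has bidegree `(0, −1)`.
-/

open Polynomial Matrix Kronecker

noncomputable section

/-!
A bidegree-preserving map between `C_E` and `C_O` can only have a monomial `U^k` linking
`1 ∈ C_O` to a generator of `C_E` of bidegree `±(k, 2k)`; among `a, b, c, d, x` only `a` and `x`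
qualify, and only with `k = 0`. Both truncated differentials vanish, so the map commutes with `ι`
on the nose, which kills the `x`-component: for `f : C_E → C_O` because `ι(a) = a + x`, for
`f : C_O → C_E` because `ι(x) = x + d`. A map `C_E → C_O` is then supported on `a`, which has zero
coefficient in every cycle of `U⁻¹C_E`; a map `C_O → C_E` also misses `a` since `∂a = Ub ≠ 0`,
so it is zero. Neither kind of map can become a homotopy equivalence after localization, since
`U⁻¹C_O` has zero differential and nonzero identity.
-/

lemma GradedMap.gr_sub_of_coeff_ne_zero {C D : CxData} {δ : ℤ × ℤ}
    {f : Matrix D.idx C.idx PolyU} (hf : GradedMap C D δ f) {i : D.idx} {j : C.idx} {k : ℕ}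
    (hk : (f i j).coeff k ≠ 0) : D.gr i - (C.gr j + δ) = ((k : ℤ), 2 * (k : ℤ)) := by
  rw [← hf i j k hk]
  ext <;> simp

lemma HatHomotopic.eq_of_dHat_eq_zero {C D : CxData} {f g : Matrix D.idx C.idx F2}
    (hC : C.dHat = 0) (hD : D.dHat = 0) (h : HatHomotopic C D f g) : f = g := by
  obtain ⟨H, hH⟩ := h
  rw [hC, hD, Matrix.zero_mul, Matrix.mul_zero, add_zero] at hH
  ext i j
  exact CharTwo.add_eq_zero.mp (congrFun (congrFun hH i) j)

lemma not_lHomotopic_zero_one {C : CxData} [Nonempty C.idx] (hC : C.dL = 0) :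
    ¬ LHomotopic C C 0 1 := by
  rintro ⟨H, hH⟩
  rw [hC, Matrix.zero_mul, Matrix.mul_zero, add_zero, zero_add] at hH
  exact one_ne_zero hH

lemma LocalizedHomotopyEquiv.not_zero {C D : CxData} [Nonempty C.idx] (hC : C.dL = 0) :
    ¬ LocalizedHomotopyEquiv C D 0 := by
  rintro ⟨g, -, hgf, -⟩
  rw [Matrix.map_zero _ (map_zero toL), Matrix.mul_zero] at hgf
  exact not_lHomotopic_zero_one hC hgf

lemma LocalizedHomotopyEquiv.not_of_forall_cycle {C D : CxData} [Nonempty D.idx]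
    {f : Matrix D.idx C.idx PolyU} (hD : D.dL = 0)
    (hf : ∀ z : Matrix C.idx D.idx Laur, C.dL * z = 0 → f.map toL * z = 0) :
    ¬ LocalizedHomotopyEquiv C D f := by
  rintro ⟨g, hg, -, hfg⟩
  rw [hD, Matrix.mul_zero] at hg
  rw [hf g hg.symm] at hfg
  exact not_lHomotopic_zero_one hD hfg

instance : Nonempty CO.C.idx := ⟨()⟩

lemma CO_dL : CO.C.dL = 0 := Matrix.map_zero _ (map_zero toL)

lemma CO_dHat : CO.C.dHat = 0 := by
  ext
  exact Polynomial.coeff_zero 0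

lemma CE_dHat : CE.C.dHat = 0 := by
  ext i j
  fin_cases i <;> fin_cases j <;> simp [CE, CxData.dHat, hatM] <;> rfl

lemma CE_gr_eq_diagonal {j : Fin 5} {m : ℤ} (h : CE.C.gr j = (m, 2 * m)) :
    m = 0 ∧ (j = 0 ∨ j = 4) := by
  fin_cases j <;> simp [CE, Prod.ext_iff] at h ⊢ <;> omega

lemma CE_cycle_apply_zero {n : Type} {z : Matrix CE.C.idx n Laur} (hz : CE.C.dL * z = 0) (c : n) :
    z (0 : Fin 5) c = 0 := by
  have h : ∑ j : Fin 5, CE.C.dL (1 : Fin 5) j * z j c = 0 := congrFun (congrFun hz (1 : Fin 5)) c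
  simpa [Fin.sum_univ_five, CE, CxData.dL, toL, (LaurentPolynomial.isUnit_T 1).ne_zero] using h

lemma mul_CE_iota_apply_zero {m : Type} (v : Matrix m CE.C.idx F2) (r : m) :
    (v * CE.iota) r (0 : Fin 5) = v r (0 : Fin 5) + v r (4 : Fin 5) := by
  change ∑ j : Fin 5, v r j * CE.iota j (0 : Fin 5) = _
  simp [Fin.sum_univ_five, CE]

lemma CE_iota_mul_apply_three {n : Type} (v : Matrix CE.C.idx n F2) (c : n) :
    (CE.iota * v) (3 : Fin 5) c = v (3 : Fin 5) c + v (4 : Fin 5) c := by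
  change ∑ j : Fin 5, CE.iota (3 : Fin 5) j * v j c = _
  simp [Fin.sum_univ_five, CE]

lemma AlmostLocalMap.CE_CO_apply_eq_zero {f : Matrix CO.C.idx CE.C.idx PolyU}
    (hf : AlmostLocalMap CE CO f) {j : Fin 5} (hj : j ≠ 0) : f () j = 0 := by
  have hx : hatM f () (4 : Fin 5) = 0 := by
    have h := congrFun (congrFun (hf.2.2.2.eq_of_dHat_eq_zero CE_dHat CO_dHat) ()) (0 : Fin 5)
    erw [mul_CE_iota_apply_zero, show CO.iota = 1 from rfl, Matrix.one_mul] at h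
    exact left_eq_add.mp h
  ext k
  rw [Polynomial.coeff_zero]
  by_contra hk
  have hgr := hf.1.gr_sub_of_coeff_ne_zero hk
  obtain ⟨hk0, rfl | rfl⟩ := CE_gr_eq_diagonal (j := j) (m := -k) (by
    simp [CO, Prod.ext_iff] at hgr ⊢; omega)
  · exact hj rfl
  · obtain rfl : k = 0 := by omega
    exact hk hx

lemma AlmostLocalMap.CO_CE_eq_zero {f : Matrix CE.C.idx CO.C.idx PolyU}
    (hf : AlmostLocalMap CO CE f) : f = 0 := by
  have hx : hatM f (4 : Fin 5) () = 0 := by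
    have h := congrFun (congrFun (hf.2.2.2.eq_of_dHat_eq_zero CO_dHat CE_dHat) (3 : Fin 5)) ()
    erw [CE_iota_mul_apply_three, show CO.iota = 1 from rfl, Matrix.mul_one] at h
    exact add_eq_left.mp h
  have ha : f (0 : Fin 5) () = 0 := by
    have h := congrFun (congrFun hf.2.1 (1 : Fin 5)) ()
    rw [show CO.C.d = 0 from rfl, Matrix.mul_zero] at h
    have h' : ∑ j : Fin 5, CE.C.d (1 : Fin 5) j * f j () = 0 := h.symm
    simpa [Fin.sum_univ_five, CE] using h'
  ext (i : Fin 5) ⟨⟩ k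
  change _ = (0 : PolyU).coeff k
  rw [Polynomial.coeff_zero]
  by_contra hk
  have hgr := hf.1.gr_sub_of_coeff_ne_zero hk
  obtain ⟨hk0, rfl | rfl⟩ := CE_gr_eq_diagonal (j := i) (m := k) (by
    simp [CO, Prod.ext_iff] at hgr ⊢; omega)
  · simp [ha] at hk
  · obtain rfl : k = 0 := by omega
    exact hk hx

/-- The classes of `C_O` and `C_E` in `𝔗^U_K` are
incomparable: there is no almost `ι_K`-local map from `C_E` to `C_O`, and
there is no almost `ι_K`-local map from `C_O` to `C_E`. -/
theorem CE_CO_incomparable : ¬ Le CE CO ∧ ¬ Le CO CE := by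
  constructor
  · rintro ⟨f, hf⟩
    refine LocalizedHomotopyEquiv.not_of_forall_cycle CO_dL (fun z hz => ?_) hf.2.2.1
    refine Matrix.ext fun _ c => ?_
    change ∑ j : Fin 5, toL (f () j) * z j c = 0
    simp [Fin.sum_univ_five, hf.CE_CO_apply_eq_zero, CE_cycle_apply_zero hz]
  · rintro ⟨f, hf⟩
    have hloc := hf.2.2.1
    rw [hf.CO_CE_eq_zero] at hloc
    exact LocalizedHomotopyEquiv.not_zero CO_dL hloc

end
end
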